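/- arXiv:1810.01528 — 6 statements merged into one kernel-verified Lean document; each statement's English description precedes it below -/
import Mathlib

section
/- Let L be a finite distributive lattice and ι : L → sets of join-irreducibles the map sending x to the set of join-irreducible elements below x. If x ⋖ y is a cover relation in L, then ι(y) \ ι(x) consists of exactly one join-irreducible element j, and moreover the cover relations (x, y) and (j_*, j) are perspective, i.e., j ∨ x = y and j ∧ x = j_*, where j_* is the unique lower cover of j. -/
/-- The set of join-irreducible elements of `L` lying below `z`. -/
def iotaSet {L : Type*} [Lattice L] (z : L) : Set L := {j | SupIrred j ∧ j ≤ z}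

/-- In a finite lattice, if `y ≰ x` then some sup-irreducible `j ≤ y` has `j ≰ x`. -/
lemma exists_supIrred_not_le {L : Type*} [Lattice L] [Fintype L]
    (y x : L) (h : ¬ y ≤ x) : ∃ j : L, SupIrred j ∧ j ≤ y ∧ ¬ j ≤ x := by
  induction y using WellFoundedLT.induction with
  | ind y IH =>
    by_cases hy : SupIrred y
    · exact ⟨y, hy, le_rfl, h⟩
    · rw [not_supIrred] at hy
      rcases hy with hmin | ⟨b, c, hbc, hb, hc⟩
      · exact absurd ((hmin (inf_le_right : x ⊓ y ≤ y)).trans inf_le_left) h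
      · by_cases hbx : b ≤ x
        · have hcx : ¬ c ≤ x := fun hcx => h (hbc ▸ sup_le hbx hcx)
          obtain ⟨j, hj, hjc, hjx⟩ := IH c hc hcx
          exact ⟨j, hj, hjc.trans (hbc ▸ le_sup_right), hjx⟩
        · obtain ⟨j, hj, hjb, hjx⟩ := IH b hb hbx
          exact ⟨j, hj, hjb.trans (hbc ▸ le_sup_left), hjx⟩

/-- In a finite distributive lattice, if `x ⋖ y` then `ι(y) \ ι(x)` consists of a single
join-irreducible element `j`, and the cover relations `(x, y)` and `(j₊, j)` are
perspective: `j ⊔ x = y` and `j ⊓ x = j₊`, where `j₊` is the unique lower cover of `j`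
(expressed here by saying that `j ⊓ x` is a lower cover of `j`). -/
theorem cover_label_distrib {L : Type*} [DistribLattice L] [Fintype L]
    {x y : L} (hxy : x ⋖ y) :
    ∃ j : L, SupIrred j ∧ iotaSet y \ iotaSet x = {j} ∧
      j ⊔ x = y ∧ (j ⊓ x) ⋖ j := by
  obtain ⟨j, hj, hjy, hjx⟩ := exists_supIrred_not_le y x hxy.lt.not_ge
  have hsup : j ⊔ x = y := by
    have h1 : x < j ⊔ x := lt_of_le_of_ne le_sup_right (fun h => hjx (h ▸ le_sup_left))
    exact ((sup_le hjy hxy.le).lt_or_eq).resolve_left (hxy.2 h1)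
  refine ⟨j, hj, ?_, hsup, ?_⟩
  · ext j'
    simp only [Set.mem_diff, Set.mem_singleton_iff, iotaSet, Set.mem_setOf_eq, not_and]
    constructor
    · rintro ⟨⟨hj', hj'y⟩, hnot⟩
      have hj'x : ¬ j' ≤ x := hnot hj'
      have h1 : j' ≤ j ⊔ x := hsup ▸ hj'y
      have h2 : j' ≤ j := (hj'.supPrime.le_sup.mp h1).resolve_right hj'x
      have h3 : j ≤ j' ⊔ x := by
        have : j ≤ y := hjy
        calc j ≤ y := hjy
          _ = j' ⊔ x := ?_
        · have h1' : x < j' ⊔ x := lt_of_le_of_ne le_sup_right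
            (fun h => hj'x (h ▸ le_sup_left))
          exact (((sup_le hj'y hxy.le).lt_or_eq).resolve_left (hxy.2 h1')).symm
      have h4 : j ≤ j' := (hj.supPrime.le_sup.mp h3).resolve_right hjx
      exact le_antisymm h2 h4
    · rintro rfl
      exact ⟨⟨hj, hjy⟩, fun _ => hjx⟩
  · constructor
    · exact lt_of_le_of_ne inf_le_left (fun h => hjx (h ▸ inf_le_right))
    · intro z hz1 hz2
      have hzj : z ≤ j := hz2.le
      have hz : j ⊓ (z ⊔ x) = z := by
        rw [inf_sup_left, inf_eq_right.mpr hzj]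
        exact sup_eq_left.mpr hz1.le
      have hxlt : x < z ⊔ x := by
        refine lt_of_le_of_ne le_sup_right (fun h => ?_)
        have : z ≤ x := h ▸ le_sup_left
        exact absurd (le_inf hzj this) hz1.not_ge
      have hzxy : z ⊔ x = y := by
        have : z ⊔ x ≤ y := sup_le (hzj.trans hjy) hxy.le
        exact (this.lt_or_eq).resolve_left (hxy.2 hxlt)
      rw [hzxy, inf_eq_left.mpr hjy] at hz
      exact hz2.ne' hz
end

section
/- A finite lattice L is join semidistributive if and only if every element of L admits a canonical join representation. -/
/-- `X` is a canonical join representation of `x`: `X` is an antichain joining to `x`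
(i.e. `x` is the least upper bound of `X`), and for every join representation `Y` of `x`
every element of `X` lies below some element of `Y`. -/
def IsCanonicalJoinRep {L : Type*} [Lattice L] (x : L) (X : Set L) : Prop :=
  IsLUB X x ∧ IsAntichain (· ≤ ·) X ∧
    ∀ Y : Set L, IsLUB Y x → ∀ a ∈ X, ∃ b ∈ Y, a ≤ b

section Aux

variable {L : Type*} [Lattice L] [OrderBot L]

lemma isLUB_finset_iff (Y : Finset L) (x : L) :
    IsLUB (↑Y : Set L) x ↔ Y.sup id = x := by
  constructor
  · rintro ⟨hub, hlb⟩
    refine le_antisymm (Finset.sup_le fun b hb => hub (Finset.mem_coe.mpr hb)) ?_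
    exact hlb fun b hb => Finset.le_sup (f := id) (Finset.mem_coe.mp hb)
  · rintro rfl
    exact ⟨fun b hb => Finset.le_sup (f := id) (Finset.mem_coe.mp hb),
      fun c hc => Finset.sup_le fun b hb => hc (Finset.mem_coe.mpr hb)⟩

/-- Key lemma: under join semidistributivity, if `u ⊔ a = w` and the join of `B`
together with `u` is `w`, then `a` may be replaced by the meets `a ⊓ b`, `b ∈ B`. -/
lemma sd_key (hSD : ∀ x y z : L, x ⊔ y = x ⊔ z → x ⊔ y = x ⊔ (y ⊓ z))
    (a w : L) (B : Finset L) :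
    ∀ u : L, u ⊔ a = w → u ⊔ B.sup id = w → u ⊔ B.sup (fun b => a ⊓ b) = w := by
  classical
  induction B using Finset.induction_on with
  | empty => intro u _ h2; simpa using h2
  | insert _ _ hb ih =>
    rename_i b B
    intro u h1 h2
    rw [Finset.sup_insert] at h2
    simp only [id_eq] at h2
    have hpb : (u ⊔ B.sup id) ⊔ b = w := by
      rw [← h2]; ac_rfl
    have haw : a ≤ w := le_of_le_of_eq le_sup_right h1
    have hpw : u ⊔ B.sup id ≤ w := le_of_le_of_eq le_sup_left hpb
    have hpa : (u ⊔ B.sup id) ⊔ a = w := by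
      refine le_antisymm (sup_le hpw haw) ?_
      calc w = u ⊔ a := h1.symm
        _ ≤ (u ⊔ B.sup id) ⊔ a := sup_le_sup_right le_sup_left a
    have hstep : (u ⊔ B.sup id) ⊔ b = (u ⊔ B.sup id) ⊔ (b ⊓ a) :=
      hSD _ _ _ (hpb.trans hpa.symm)
    have h3 : (u ⊔ (a ⊓ b)) ⊔ B.sup id = w := by
      rw [← hpb, hstep, inf_comm b a]; ac_rfl
    have h4 : (u ⊔ (a ⊓ b)) ⊔ a = w := by
      rw [sup_assoc, sup_comm (a ⊓ b) a, sup_inf_self]; exact h1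
    have h5 := ih (u ⊔ (a ⊓ b)) h4 h3
    rw [Finset.sup_insert, ← sup_assoc]
    exact h5

/-- Refinement lemma: two join representations of `w` admit a common refinement
by pairwise meets. -/
lemma sd_refine (hSD : ∀ x y z : L, x ⊔ y = x ⊔ z → x ⊔ y = x ⊔ (y ⊓ z))
    (w : L) (B : Finset L) (hB : B.sup id = w) (A : Finset L) :
    ∀ u : L, u ⊔ A.sup id = w →
      u ⊔ A.sup (fun a => B.sup (fun b => a ⊓ b)) = w := by
  classical
  induction A using Finset.induction_on with
  | empty => intro u h; simpa using h
  | insert _ _ ha ih =>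
    rename_i a A
    intro u h
    rw [Finset.sup_insert] at h
    simp only [id_eq] at h
    have h1 : (u ⊔ A.sup id) ⊔ a = w := by rw [← h]; ac_rfl
    have h2 : (u ⊔ A.sup id) ⊔ B.sup id = w := by
      rw [hB]
      exact sup_eq_right.mpr (le_of_le_of_eq le_sup_left h1)
    have h3 := sd_key hSD a w B (u ⊔ A.sup id) h1 h2
    have h4 : (u ⊔ B.sup (fun b => a ⊓ b)) ⊔ A.sup id = w := by
      rw [← h3]; ac_rfl
    have h5 := ih (u ⊔ B.sup (fun b => a ⊓ b)) h4
    rw [Finset.sup_insert, ← sup_assoc]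
    exact h5

/-- In a finite join-semidistributive lattice, each element has a join representation
refining all others. -/
lemma exists_min_rep [Fintype L]
    (hSD : ∀ x y z : L, x ⊔ y = x ⊔ z → x ⊔ y = x ⊔ (y ⊓ z)) (x : L) :
    ∃ W : Finset L, W.sup id = x ∧
      ∀ Y : Finset L, Y.sup id = x → ∀ a ∈ W, ∃ b ∈ Y, a ≤ b := by
  classical
  have claim : ∀ s : Finset (Finset L), (∀ Y ∈ s, Y.sup id = x) →
      ∃ W : Finset L, W.sup id = x ∧ ∀ Y ∈ s, ∀ a ∈ W, ∃ b ∈ Y, a ≤ b := by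
    intro s
    induction s using Finset.induction_on with
    | empty =>
      intro _
      exact ⟨{x}, by simp, by simp⟩
    | insert _ _ hY ih =>
      rename_i Y s
      intro hmem
      obtain ⟨W', hW', hmin⟩ := ih fun Z hZ => hmem Z (Finset.mem_insert_of_mem hZ)
      have hYx : Y.sup id = x := hmem Y (Finset.mem_insert_self _ _)
      refine ⟨W'.biUnion (fun a => Y.image (fun b => a ⊓ b)), ?_, ?_⟩
      · have := sd_refine hSD x Y hYx W' ⊥ (by simpa using hW')
        rw [Finset.sup_biUnion]
        simpa [Finset.sup_image, Function.comp] using this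
      · intro Z hZ c hc
        simp only [Finset.mem_biUnion, Finset.mem_image] at hc
        obtain ⟨p, hp, q, hq, rfl⟩ := hc
        rcases Finset.mem_insert.mp hZ with rfl | hZs
        · exact ⟨q, hq, inf_le_right⟩
        · obtain ⟨b, hb, hpb⟩ := hmin Z hZs p hp
          exact ⟨b, hb, le_trans inf_le_left hpb⟩
  obtain ⟨W, hW, hmin⟩ :=
    claim (Finset.univ.filter (fun Y => Y.sup id = x))
      (fun Y hY => (Finset.mem_filter.mp hY).2)
  exact ⟨W, hW, fun Y hY => hmin Y (Finset.mem_filter.mpr ⟨Finset.mem_univ _, hY⟩)⟩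

lemma exists_canonical [Fintype L]
    (hSD : ∀ x y z : L, x ⊔ y = x ⊔ z → x ⊔ y = x ⊔ (y ⊓ z)) (x : L) :
    ∃ X : Set L, IsCanonicalJoinRep x X := by
  classical
  obtain ⟨W, hW, hmin⟩ := exists_min_rep hSD x
  set X : Finset L := W.filter (fun a => ∀ b ∈ W, a ≤ b → a = b) with hX
  have hmax : ∀ a ∈ W, ∃ m ∈ X, a ≤ m := by
    intro a ha
    obtain ⟨m, hm, hmmax⟩ :=
      (W.filter (fun b => a ≤ b)).exists_maximal ⟨a, Finset.mem_filter.mpr ⟨ha, le_rfl⟩⟩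
    rw [Finset.mem_filter] at hm
    refine ⟨m, Finset.mem_filter.mpr ⟨hm.1, ?_⟩, hm.2⟩
    intro b hb hmb
    by_contra hne
    exact hne (le_antisymm hmb (hmmax (Finset.mem_filter.mpr ⟨hb, hm.2.trans hmb⟩) hmb))
  have hXsup : X.sup id = x := by
    refine le_antisymm ?_ ?_
    · rw [← hW]
      exact Finset.sup_le fun b hb => Finset.le_sup (f := id) (Finset.mem_filter.mp hb).1
    · rw [← hW]
      refine Finset.sup_le fun a ha => ?_
      obtain ⟨m, hm, ham⟩ := hmax a ha
      exact le_trans ham (Finset.le_sup (f := id) hm)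
  refine ⟨↑X, (isLUB_finset_iff X x).mpr hXsup, ?_, ?_⟩
  · intro a ha b hb hne hab
    rw [Finset.mem_coe, hX, Finset.mem_filter] at ha hb
    exact hne (ha.2 b hb.1 hab)
  · intro Y hY a ha
    have hfin : Y.Finite := Set.toFinite Y
    have hYlub : IsLUB (↑hfin.toFinset : Set L) x := by rwa [Set.Finite.coe_toFinset]
    obtain ⟨b, hb, hab⟩ :=
      hmin hfin.toFinset ((isLUB_finset_iff _ x).mp hYlub) a
        (Finset.mem_filter.mp (Finset.mem_coe.mp ha)).1
    exact ⟨b, hfin.mem_toFinset.mp hb, hab⟩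

end Aux

/-- A finite lattice is join semidistributive if and only if every element admits a
canonical join representation. -/
theorem joinSemidistrib_iff_canonicalJoinReps (L : Type*) [Lattice L] [Fintype L] :
    (∀ x y z : L, x ⊔ y = x ⊔ z → x ⊔ y = x ⊔ (y ⊓ z)) ↔
      ∀ x : L, ∃ X : Set L, IsCanonicalJoinRep x X := by
  constructor
  · intro hSD x
    have : Nonempty L := ⟨x⟩
    letI : BoundedOrder L := Fintype.toBoundedOrder L
    exact exists_canonical hSD x
  · intro h x y z hxyz
    obtain ⟨X, hlub, _, hmin⟩ := h (x ⊔ y)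
    have hub : x ⊔ (y ⊓ z) ∈ upperBounds X := by
      intro a ha
      obtain ⟨b, hb, hab⟩ := hmin {x, y} isLUB_pair a ha
      obtain ⟨c, hc, hac⟩ := hmin {x, z} (hxyz ▸ isLUB_pair) a ha
      simp only [Set.mem_insert_iff, Set.mem_singleton_iff] at hb hc
      rcases hb with rfl | rfl
      · exact le_trans hab le_sup_left
      · rcases hc with rfl | rfl
        · exact le_trans hac le_sup_left
        · exact le_trans (le_inf hab hac) le_sup_right
    exact le_antisymm (hlub.2 hub) (sup_le_sup_left inf_le_left x)
end

section
/- In a finite distributive lattice L, for every element x, the canonical join representation of x equals ι(x) \ ι(x_↓), where x_↓ is the meet of all lower covers of x and ι(z) denotes the set of join-irreducible elements below z. -/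
open Classical in
/-- The nucleus `x₊` of `x`: the meet of all lower covers of `x`, with the
convention `x₊ = x` when `x` has no lower cover. -/
noncomputable def nucleus {L : Type*} [Lattice L] [Fintype L] (x : L) : L :=
  if h : ({y : L | y ⋖ x}).toFinset.Nonempty then ({y : L | y ⋖ x}).toFinset.inf' h id
  else x

section Aux

variable {L : Type*}

/-- If every sup-irreducible below `x` is below `y`, then `x ≤ y` (finite lattice). -/
lemma aux_le_of_supIrred_le [Lattice L] [Fintype L] :
    ∀ x y : L, (∀ j : L, SupIrred j → j ≤ x → j ≤ y) → x ≤ y := by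
  intro x
  induction x using WellFoundedLT.induction with
  | _ x ih =>
    intro y h
    by_cases hm : IsMin x
    · exact (hm (inf_le_left (a := x) (b := y))).trans inf_le_right
    by_cases hi : SupIrred x
    · exact h x hi le_rfl
    · obtain hmin | ⟨b, c, hbc, hb, hc⟩ := not_supIrred.mp hi
      · exact absurd hmin hm
      · have hby : b ≤ y := ih b hb y fun j hj hjb => h j hj (hjb.trans hb.le)
        have hcy : c ≤ y := ih c hc y fun j hj hjc => h j hj (hjc.trans hc.le)
        rw [← hbc]
        exact sup_le hby hcy

open Classical in
lemma aux_exists_covBy [Lattice L] [Fintype L] {y x : L} (h : y < x) :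
    ∃ c, y ≤ c ∧ c ⋖ x := by
  classical
  have hne : ({c : L | y ≤ c ∧ c < x}).toFinset.Nonempty := by
    refine ⟨y, ?_⟩
    simp [h]
  obtain ⟨m, hm, hmax⟩ := Finset.exists_maximal hne
  simp only [Set.mem_toFinset, Set.mem_setOf_eq] at hm
  refine ⟨m, hm.1, hm.2, fun z hz hzx => ?_⟩
  exact hz.not_ge (hmax (by simp [Set.mem_toFinset, Set.mem_setOf_eq,
    hm.1.trans hz.le, hzx]) hz.le)

open Classical in
lemma aux_nucleus_le_of_covBy [Lattice L] [Fintype L] {c x : L} (h : c ⋖ x) :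
    nucleus x ≤ c := by
  classical
  have hc : c ∈ ({y : L | y ⋖ x}).toFinset := by simp [h]
  rw [nucleus, dif_pos ⟨c, hc⟩]
  exact Finset.inf'_le id hc

open Classical in
lemma aux_le_nucleus [Lattice L] [Fintype L] {j x : L} (hjx : j ≤ x)
    (h : ∀ c : L, c ⋖ x → j ≤ c) : j ≤ nucleus x := by
  classical
  rw [nucleus]
  split_ifs with hne
  · exact Finset.le_inf' hne id fun c hc => h c (by simpa using hc)
  · exact hjx

lemma aux_supPrime_le_sup' [SemilatticeSup L] {ι : Type*} {a : L} (ha : SupPrime a)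
    {s : Finset ι} (hs : s.Nonempty) {f : ι → L} (h : a ≤ s.sup' hs f) :
    ∃ i ∈ s, a ≤ f i := by
  induction hs using Finset.Nonempty.cons_induction with
  | singleton i => exact ⟨i, by simp, by simpa using h⟩
  | cons i s his hs ih =>
    rw [Finset.sup'_cons hs] at h
    rcases ha.le_sup.mp h with h' | h'
    · exact ⟨i, Finset.mem_cons_self i s, h'⟩
    · obtain ⟨j, hj, hj'⟩ := ih h'
      exact ⟨j, Finset.mem_cons.mpr (Or.inr hj), hj'⟩

end Aux

/-- In a finite distributive lattice, the canonical join representation of `x` is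
`ι(x) \ ι(x₊)`, where `x₊` is the meet of the lower covers of `x`. -/
theorem canonicalJoinRep_eq_iota_diff {L : Type*} [DistribLattice L] [Fintype L]
    (x : L) : IsCanonicalJoinRep x (iotaSet x \ iotaSet (nucleus x)) := by
  classical
  have hmem : ∀ j : L, j ∈ iotaSet x \ iotaSet (nucleus x) ↔
      SupIrred j ∧ j ≤ x ∧ ¬ j ≤ nucleus x := by
    intro j
    simp only [Set.mem_diff, iotaSet, Set.mem_setOf_eq]
    tauto
  refine ⟨⟨fun j hj => ((hmem j).mp hj).2.1, ?_⟩, ?_, ?_⟩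
  · -- least upper bound
    intro u hu
    by_contra hxu
    have hlt : x ⊓ u < x := lt_of_le_of_ne inf_le_left (fun h => hxu (h ▸ inf_le_right))
    obtain ⟨c, hyc, hcx⟩ := aux_exists_covBy hlt
    have : x ≤ c := by
      apply aux_le_of_supIrred_le
      intro j hj hjx
      by_cases hn : j ≤ nucleus x
      · exact hn.trans (aux_nucleus_le_of_covBy hcx)
      · have hju : j ≤ u := hu ((hmem j).mpr ⟨hj, hjx, hn⟩)
        exact (le_inf hjx hju).trans hyc
    exact absurd this hcx.lt.not_ge
  · -- antichain
    intro j hj k hk hne hle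
    rw [hmem] at hj hk
    have hjk : j < k := lt_of_le_of_ne hle hne
    apply hj.2.2
    apply aux_le_nucleus hj.2.1
    intro c hc
    by_contra hjc
    -- c ⊔ j = x
    have hle' : c ⊔ j ≤ x := sup_le hc.lt.le hj.2.1
    have hcjx : c ⊔ j = x := by
      by_contra hne'
      have h1 : c < c ⊔ j :=
        lt_of_le_of_ne le_sup_left fun h => hjc (sup_eq_left.mp h.symm)
      exact hc.2 h1 (lt_of_le_of_ne hle' hne')
    have hk' : (k ⊓ c) ⊔ j = k := by
      have : k ⊓ (c ⊔ j) = k := inf_eq_left.mpr (hcjx ▸ hk.2.1)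
      calc (k ⊓ c) ⊔ j = (k ⊓ c) ⊔ (k ⊓ j) := by rw [inf_eq_right.mpr hjk.le]
        _ = k ⊓ (c ⊔ j) := (inf_sup_left k c j).symm
        _ = k := this
    rcases hk.1.2 hk' with h' | h'
    · exact hjc (hjk.le.trans (inf_eq_left.mp h'))
    · exact hjk.ne h'
  · -- refinement
    intro Y hY a ha
    rw [hmem] at ha
    rcases Set.eq_empty_or_nonempty Y with rfl | ⟨b0, hb0⟩
    · -- x is the least element, contradiction with a sup-irreducible below x
      exfalso
      have hxmin : ∀ z : L, x ≤ z := fun z => hY.2 (by simp [upperBounds])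
      exact ha.2.2 (ha.2.1.trans (hxmin (nucleus x)))
    · have hYfin : Y.Finite := Set.toFinite Y
      set T : Finset L := hYfin.toFinset with hT
      have hTne : T.Nonempty := ⟨b0, hYfin.mem_toFinset.mpr hb0⟩
      have hxT : x = T.sup' hTne id := by
        refine le_antisymm ?_ ?_
        · exact hY.2 fun b hb => Finset.le_sup' id (hYfin.mem_toFinset.mpr hb)
        · exact Finset.sup'_le _ _ fun b hb => hY.1 (hYfin.mem_toFinset.mp hb)
      have hax : a ≤ T.sup' hTne id := hxT ▸ ha.2.1
      obtain ⟨b, hb, hab⟩ := aux_supPrime_le_sup' ha.1.supPrime hTne hax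
      exact ⟨b, hYfin.mem_toFinset.mp hb, hab⟩
end

section
/- A finite distributive lattice L is isomorphic to a Boolean lattice if and only if the meet of all coatoms of L (the lower covers of the top element) is the bottom element. -/
open Classical in
/-- Characterization of `nucleus ⊤ = ⊥` without mentioning the `Finset.inf'`. -/
lemma nucleus_top_eq_bot_char (L : Type*) [Lattice L] [Fintype L] [BoundedOrder L] :
    nucleus (⊤ : L) = (⊥ : L) ↔ ∀ y : L, (∀ m : L, IsCoatom m → y ≤ m) → y = ⊥ := by
  unfold nucleus
  have hmem : ∀ m : L, m ∈ ({y : L | y ⋖ (⊤ : L)}).toFinset ↔ IsCoatom m := by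
    intro m; rw [Set.mem_toFinset]; exact covBy_top_iff
  split_ifs with h
  · constructor
    · intro heq y hy
      refine le_antisymm ?_ bot_le
      calc y ≤ ({y : L | y ⋖ (⊤ : L)}).toFinset.inf' h id := by
              exact Finset.le_inf' h id fun m hm => hy m ((hmem m).1 hm)
        _ = ⊥ := heq
    · intro hchar
      exact hchar _ fun m hm => Finset.inf'_le id ((hmem m).2 hm)
  · constructor
    · intro heq y _
      exact le_antisymm (le_top.trans heq.le) bot_le
    · intro hchar
      refine hchar ⊤ fun m hm => absurd ⟨m, (hmem m).2 hm⟩ h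

/-- A coatom in a distributive lattice is inf-prime. -/
lemma IsCoatom.infPrime {L : Type*} [DistribLattice L] [OrderTop L] {m : L}
    (hm : IsCoatom m) : InfPrime m := by
  refine ⟨fun hmax => hm.1 (top_le_iff.1 (hmax le_top)), fun {b c} hbc => ?_⟩
  by_contra hcon
  push_neg at hcon
  obtain ⟨hb, hc⟩ := hcon
  have key : ∀ d : L, ¬ d ≤ m → m ⊔ d = ⊤ := by
    intro d hd
    refine hm.2 _ (lt_of_le_of_ne le_sup_left ?_)
    intro hEq
    exact hd (le_trans le_sup_right hEq.symm.le)
  have h1 : (m ⊔ b) ⊓ (m ⊔ c) = ⊤ := by rw [key b hb, key c hc, top_inf_eq]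
  rw [← sup_inf_left] at h1
  exact hm.1 ((sup_eq_left.2 hbc).symm.trans h1)

open Classical in
/-- If the meet of all coatoms is `⊥`, the finite distributive lattice is complemented. -/
lemma complemented_of_char (L : Type*) [DistribLattice L] [Fintype L] [BoundedOrder L]
    (hchar : ∀ y : L, (∀ m : L, IsCoatom m → y ≤ m) → y = ⊥) :
    ComplementedLattice L := by
  constructor
  intro x
  set S : Finset L := Finset.univ.filter (fun m => IsCoatom m ∧ ¬ x ≤ m) with hS
  refine ⟨S.inf id, ?_, ?_⟩
  · rw [disjoint_iff]
    refine hchar _ fun m hm => ?_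
    by_cases hxm : x ≤ m
    · exact inf_le_left.trans hxm
    · exact inf_le_right.trans (Finset.inf_le (by simp [hS, hm, hxm]))
  · rw [codisjoint_iff]
    by_contra hne
    have hlt : x ⊔ S.inf id < ⊤ := lt_of_le_of_ne le_top hne
    obtain ⟨m, hm, hle⟩ : ∃ m : L, IsCoatom m ∧ x ⊔ S.inf id ≤ m := by
      rcases eq_top_or_exists_le_coatom (x ⊔ S.inf id) with h | h
      · exact absurd h hne
      · exact h
    have hx : x ≤ m := le_sup_left.trans hle
    have hinf : S.inf id ≤ m := le_sup_right.trans hle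
    obtain ⟨m', hm'S, hm'le⟩ := (hm.infPrime.finset_inf_le).1 hinf
    simp only [hS, Finset.mem_filter, Finset.mem_univ, true_and] at hm'S
    have : m' = m := by
      rcases lt_or_eq_of_le hm'le with h | h
      · exact absurd (hm'S.1.2 _ h) hm.1
      · exact h
    exact hm'S.2 (this ▸ hx)

/-- A finite Boolean algebra is order-isomorphic to the powerset of its atoms. -/
noncomputable def finiteBooleanAlgebraIso (L : Type*) [BooleanAlgebra L] [Fintype L] :
    L ≃o Set {a : L // IsAtom a} := by
  letI : CompleteAtomicBooleanAlgebra L := Fintype.toCompleteAtomicBooleanAlgebra L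
  refine Equiv.toOrderIso
    { toFun := fun x => {a : {a : L // IsAtom a} | (a : L) ≤ x}
      invFun := fun s => sSup ((fun a : {a : L // IsAtom a} => (a : L)) '' s)
      left_inv := ?_
      right_inv := ?_ } ?_ ?_
  · intro x
    have himg : (fun a : {a : L // IsAtom a} => (a : L)) ''
        {a : {a : L // IsAtom a} | (a : L) ≤ x} = {b : L | IsAtom b ∧ b ≤ x} := by
      ext b
      constructor
      · rintro ⟨a, ha, rfl⟩; exact ⟨a.2, ha⟩
      · rintro ⟨hb, hbx⟩; exact ⟨⟨b, hb⟩, hbx, rfl⟩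
    show sSup ((fun a : {a : L // IsAtom a} => (a : L)) '' {a : {a : L // IsAtom a} | (a : L) ≤ x}) = x
    rw [himg]
    exact sSup_atoms_le_eq x
  · intro s
    ext a
    simp only [Set.mem_setOf_eq]
    constructor
    · intro ha
      by_contra hns
      have h1 : (a : L) = (a : L) ⊓ sSup ((fun a : {a : L // IsAtom a} => (a : L)) '' s) :=
        (inf_eq_left.2 ha).symm
      have h2 : (a : L) ⊓ sSup ((fun a : {a : L // IsAtom a} => (a : L)) '' s) ≤ ⊥ := by
        rw [inf_sSup_eq]
        refine iSup₂_le fun b hb => ?_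
        obtain ⟨a', ha's, rfl⟩ := hb
        have hne : (a : L) ≠ (a' : L) := by
          intro hEq
          exact hns (by rwa [show a = a' from Subtype.ext hEq])
        exact (a.2.disjoint_of_ne a'.2 hne).le_bot
      exact absurd (le_antisymm (h1 ▸ h2) bot_le) a.2.1
    · intro ha
      exact le_sSup ⟨a, ha, rfl⟩
  · intro x y hxy a ha
    exact le_trans ha hxy
  · intro s t hst
    exact sSup_le_sSup (Set.image_mono hst)

/-- A finite distributive lattice is isomorphic to a Boolean lattice if and only if the
meet of all coatoms (the lower covers of the top element) is the bottom element. -/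
theorem boolean_iff_nucleus_top_eq_bot (L : Type*) [DistribLattice L] [Fintype L]
    [BoundedOrder L] :
    (∃ k : ℕ, Nonempty (L ≃o Set (Fin k))) ↔ nucleus (⊤ : L) = (⊥ : L) := by
  rw [nucleus_top_eq_bot_char]
  constructor
  · rintro ⟨k, ⟨e⟩⟩ y hy
    have hey : e y = (⊥ : Set (Fin k)) := by
      rw [Set.bot_eq_empty, Set.eq_empty_iff_forall_notMem]
      intro i hi
      have hco : IsCoatom ({i}ᶜ : Set (Fin k)) := Set.isCoatom_singleton_compl i
      have hcoL : IsCoatom (e.symm ({i}ᶜ : Set (Fin k))) :=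
        (e.symm.isCoatom_iff _).2 hco
      have := hy _ hcoL
      have h2 : e y ≤ ({i}ᶜ : Set (Fin k)) := by
        have := e.monotone this
        rwa [e.apply_symm_apply] at this
      exact h2 hi rfl
    have := congrArg e.symm hey
    rwa [e.symm_apply_apply, map_bot] at this
  · intro hchar
    classical
    haveI := complemented_of_char L hchar
    letI : BooleanAlgebra L := DistribLattice.booleanAlgebraOfComplemented L
    let f := finiteBooleanAlgebraIso L
    let g := (Fintype.equivFin {a : L // IsAtom a}).toOrderIsoSet
    exact ⟨Fintype.card {a : L // IsAtom a}, ⟨f.trans g⟩⟩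
end

section
/- Let L be a finite distributive lattice, and for x ∈ L let Ψ(x) = Γ(x) = ι(x) \ ι(x_↓) as above. Then for all x, y ∈ L there exists z ∈ L with Ψ(z) = Ψ(x) ∩ Ψ(y). (The intersection property holds for finite distributive lattices.) -/
/-- The canonical join representation `Γ(x) = ι(x) \ ι(x₊)` of `x`. -/
noncomputable def gammaSet {L : Type*} [Lattice L] [Fintype L] (x : L) : Set L :=
  iotaSet x \ iotaSet (nucleus x)

section Aux

open Classical

variable {L : Type*} [Lattice L] [Fintype L]

theorem nucleus_le (x : L) : nucleus x ≤ x := by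
  unfold nucleus
  split
  · rename_i h
    obtain ⟨v, hv⟩ := h
    exact le_trans (Finset.inf'_le id hv) (Set.mem_toFinset.1 hv).le
  · exact le_rfl

theorem exists_cover_not_le {x j : L} (hj : j ≤ x) (h : ¬ j ≤ nucleus x) :
    ∃ v, v ⋖ x ∧ ¬ j ≤ v := by
  by_contra hc
  push_neg at hc
  apply h
  unfold nucleus
  split
  · refine Finset.le_inf' _ _ fun v hv => hc v ?_
    simpa using hv
  · exact hj

theorem nucleus_le_cover {x v : L} (hv : v ⋖ x) : nucleus x ≤ v := by
  have hm : v ∈ ({y : L | y ⋖ x}).toFinset := Set.mem_toFinset.2 hv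
  unfold nucleus
  rw [dif_pos ⟨v, hm⟩]
  exact Finset.inf'_le id hm

theorem mem_gammaSet_iff {x j : L} :
    j ∈ gammaSet x ↔ SupIrred j ∧ j ≤ x ∧ ¬ j ≤ nucleus x := by
  constructor
  · rintro ⟨⟨hirr, hle⟩, hnot⟩
    exact ⟨hirr, hle, fun h => hnot ⟨hirr, h⟩⟩
  · rintro ⟨hirr, hle, hn⟩
    exact ⟨⟨hirr, hle⟩, fun h => hn h.2⟩

/-- If `v ⋖ x`, `j ≤ x` and `j ≰ v`, then `v ⊔ j = x`. -/
theorem cover_sup_eq {x v j : L} (hv : v ⋖ x) (hj : j ≤ x) (hnj : ¬ j ≤ v) :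
    v ⊔ j = x := by
  rcases lt_or_eq_of_le (sup_le hv.le hj : v ⊔ j ≤ x) with h | h
  · exact absurd h (hv.2 (lt_of_le_of_ne le_sup_left fun hv' => hnj (le_sup_right.trans hv'.ge)))
  · exact h

end Aux

section DistribAux

variable {L : Type*} [DistribLattice L] [Fintype L]

/-- Elements of `Γ(x)` are maximal among the sup-irreducibles below `x`. -/
theorem gammaSet_max {x j k : L} (hj : j ∈ gammaSet x) (hk : SupIrred k)
    (hkx : k ≤ x) (hjk : j ≤ k) : j = k := by
  rcases eq_or_lt_of_le hjk with h | h
  · exact h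
  obtain ⟨hjirr, hjx, hjn⟩ := mem_gammaSet_iff.1 hj
  obtain ⟨v, hv, hnjv⟩ := exists_cover_not_le hjx hjn
  have hx : v ⊔ j = x := cover_sup_eq hv hjx hnjv
  rcases hk.supPrime.le_sup.1 (hx ▸ hkx) with h' | h'
  · exact absurd (h.le.trans h') hnjv
  · exact absurd h' (not_le_of_gt h)

theorem supPrime_le_sup' {j : L} (hj : SupPrime j) {s : Finset L} (hs : s.Nonempty)
    (h : j ≤ s.sup' hs id) : ∃ a ∈ s, j ≤ a := by
  induction hs using Finset.Nonempty.cons_induction with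
  | singleton a => exact ⟨a, by simp, by simpa using h⟩
  | cons a s ha hs ih =>
    rw [Finset.sup'_cons (H := hs)] at h
    rcases hj.le_sup.1 h with h' | h'
    · exact ⟨a, Finset.mem_cons_self a s, h'⟩
    · obtain ⟨b, hb, hjb⟩ := ih h'
      exact ⟨b, Finset.mem_cons.2 (Or.inr hb), hjb⟩

/-- The key lemma: for a nonempty antichain `C` of sup-irreducibles, the `gammaSet`
of `C.sup' id` is exactly `C`. -/
theorem gammaSet_sup'_antichain {C : Finset L} (hC : C.Nonempty)
    (hirr : ∀ c ∈ C, SupIrred c)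
    (hanti : ∀ c ∈ C, ∀ c' ∈ C, c ≤ c' → c = c') :
    gammaSet (C.sup' hC id) = ↑C := by
  classical
  set z := C.sup' hC id with hz
  have hle : ∀ c ∈ C, c ≤ z := fun c hc => Finset.le_sup' id hc
  ext j
  simp only [Finset.coe_sort_coe, Finset.mem_coe]
  constructor
  · intro hj
    obtain ⟨hjirr, hjz, _⟩ := mem_gammaSet_iff.1 hj
    obtain ⟨c, hc, hjc⟩ := supPrime_le_sup' hjirr.supPrime hC hjz
    have := gammaSet_max hj (hirr c hc) (hle c hc) hjc
    exact this ▸ hc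
  · intro hc
    have hcirr := hirr j hc
    refine mem_gammaSet_iff.2 ⟨hcirr, hle j hc, fun hjn => ?_⟩
    rcases (C.erase j).eq_empty_or_nonempty with he | he
    · -- C = {j}, so z = j; since j is sup-irreducible it is not minimal,
      -- hence j has a lower cover v, and j ≤ nucleus j ≤ v < j, contradiction.
      have hCj : C = {j} := by
        apply Finset.eq_singleton_iff_unique_mem.2 ⟨hc, fun b hb => ?_⟩
        by_contra hbj
        exact (Finset.ne_empty_of_mem (Finset.mem_erase.2 ⟨hbj, hb⟩)) he
      have hzj : z = j := le_antisymm
        (Finset.sup'_le hC id fun b hb => le_of_eq (Finset.mem_singleton.1 (hCj ▸ hb)))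
        (hle j hc)
      obtain ⟨d, hd⟩ := not_isMin_iff.1 hcirr.supPrime.not_isMin
      obtain ⟨v, _, hv⟩ := exists_le_covBy_of_lt hd
      have : j ≤ v := le_trans (hzj ▸ hjn) (nucleus_le_cover (hzj ▸ hv))
      exact absurd this (not_le_of_gt hv.lt)
    · set w := (C.erase j).sup' he id with hw
      have hwz : w ≤ z := Finset.sup'_le he id fun b hb => hle b (Finset.mem_of_mem_erase hb)
      have hwlt : w < z := by
        rcases lt_or_eq_of_le hwz with h | h
        · exact h
        exfalso
        have hjw : j ≤ w := h ▸ hle j hc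
        obtain ⟨b, hb, hjb⟩ := supPrime_le_sup' hcirr.supPrime he hjw
        obtain ⟨hbj, hbC⟩ := Finset.mem_erase.1 hb
        exact hbj.symm (hanti j hc b hbC hjb)
      obtain ⟨v, hwv, hv⟩ := exists_le_covBy_of_lt hwlt
      have hjv : j ≤ v := le_trans hjn (nucleus_le_cover hv)
      have : z ≤ v := by
        refine Finset.sup'_le hC id fun b hb => ?_
        by_cases hbj : b = j
        · exact hbj ▸ hjv
        · exact le_trans (Finset.le_sup' id (Finset.mem_erase.2 ⟨hbj, hb⟩)) hwv
      exact absurd this (not_le_of_gt hv.lt)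

end DistribAux

open Classical in
/-- **Intersection property for finite distributive lattices.** For all `x, y` there is
`z` with `Ψ(z) = Ψ(x) ∩ Ψ(y)`, where `Ψ(x) = Γ(x) = ι(x) \ ι(x₊)`. -/
theorem distrib_intersection_property {L : Type*} [DistribLattice L] [Fintype L]
    (x y : L) : ∃ z : L, gammaSet z = gammaSet x ∩ gammaSet y := by
  classical
  set C : Finset L := (gammaSet x ∩ gammaSet y).toFinset with hCdef
  have hCmem : ∀ c, c ∈ C ↔ c ∈ gammaSet x ∩ gammaSet y := by
    intro c; rw [hCdef, Set.mem_toFinset]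
  rcases C.eq_empty_or_nonempty with he | hne
  · -- take z = the bottom of the finite lattice
    have hU : (Finset.univ : Finset L).Nonempty := ⟨x, Finset.mem_univ x⟩
    set b : L := Finset.univ.inf' hU id with hb
    have hbot : ∀ a : L, b ≤ a := fun a => Finset.inf'_le id (Finset.mem_univ a)
    refine ⟨b, ?_⟩
    have h1 : gammaSet b = ∅ := by
      ext j
      simp only [Set.mem_empty_iff_false, iff_false]
      intro hj
      obtain ⟨hirr, hle, hn⟩ := mem_gammaSet_iff.1 hj
      obtain ⟨v, hv, _⟩ := exists_cover_not_le hle hn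
      exact absurd (hbot v) (not_le_of_gt hv.lt)
    have h2 : gammaSet x ∩ gammaSet y = ∅ := by
      ext j
      simp only [Set.mem_empty_iff_false, iff_false]
      intro hj
      exact (Finset.ne_empty_of_mem ((hCmem j).2 hj)) he
    rw [h1, h2]
  · refine ⟨C.sup' hne id, ?_⟩
    have hirr : ∀ c ∈ C, SupIrred c := fun c hc =>
      (mem_gammaSet_iff.1 ((hCmem c).1 hc).1).1
    have hanti : ∀ c ∈ C, ∀ c' ∈ C, c ≤ c' → c = c' := by
      intro c hc c' hc' hle
      exact gammaSet_max ((hCmem c).1 hc).1 (hirr c' hc')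
        (mem_gammaSet_iff.1 ((hCmem c').1 hc').1).2.1 hle
    rw [gammaSet_sup'_antichain hne hirr hanti]
    ext j
    rw [Finset.mem_coe, hCmem]
end

section
/- In a finite distributive lattice L, for every x ∈ L the set Γ(x) = ι(x) \ ι(x_↓) is an irredundant join representation of x: x = ⋁Γ(x), and no proper subset of Γ(x) joins to x. -/
section Aux

variable {L : Type*} [DistribLattice L] [Fintype L]

lemma nucleus_le_of_covBy {x c : L} (h : c ⋖ x) : nucleus x ≤ c := by
  classical
  have hm : c ∈ ({y : L | y ⋖ x}).toFinset := Set.mem_toFinset.2 h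
  rw [nucleus, dif_pos ⟨c, hm⟩]
  exact Finset.inf'_le id hm

lemma le_nucleus {x j : L} (hjx : j ≤ x) (h : ∀ c : L, c ⋖ x → j ≤ c) :
    j ≤ nucleus x := by
  classical
  rw [nucleus]
  split_ifs with hne
  · refine Finset.le_inf' hne id fun c hc => h c ?_
    have hc' : c ∈ {y : L | y ⋖ x} := Set.mem_toFinset.1 hc
    exact hc'
  · exact hjx

/-- Maximality: if `j < y` with `y` join-irreducible and `y ≤ x`, then `j ≤ x₊`. -/
lemma le_nucleus_of_lt {x j y : L} (hy : SupIrred y) (hyx : y ≤ x) (hjy : j < y) :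
    j ≤ nucleus x := by
  refine le_nucleus (hjy.le.trans hyx) fun c hc => ?_
  by_contra hjc
  have hcj_le : c ⊔ j ≤ x := sup_le hc.lt.le (hjy.le.trans hyx)
  have hclt : c < c ⊔ j :=
    lt_of_le_of_ne le_sup_left fun he => hjc (le_sup_right.trans_eq he.symm)
  have hx : c ⊔ j = x := (lt_or_eq_of_le hcj_le).resolve_left (hc.2 hclt)
  rcases (hy.supPrime.le_sup).1 (hx ▸ hyx) with h | h
  · exact hjc (hjy.le.trans h)
  · exact absurd hjy (not_lt_of_ge h)

end Aux

/-- In a finite distributive lattice, `Γ(x) = ι(x) \ ι(x₊)` is an irredundant join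
representation of `x`: `x = ⋁ Γ(x)`, and every proper subset of `Γ(x)` joins to an
element strictly below `x`. -/
theorem gamma_irredundant_join_rep {L : Type*} [DistribLattice L] [Fintype L]
    (x : L) :
    IsLUB (gammaSet x) x ∧
      ∀ Y : Set L, Y ⊂ gammaSet x → ∀ b : L, IsLUB Y b → b < x := by
  classical
  have hnonempty : Nonempty L := ⟨x⟩
  letI : OrderBot L := Fintype.toOrderBot L
  obtain ⟨s, hs, hsirr⟩ := exists_supIrred_decomposition x
  -- no lower cover of `x` lies above all of `Γ(x)`
  have key : ∀ c : L, c ⋖ x → ¬ ∀ j ∈ gammaSet x, j ≤ c := by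
    intro c hc hall
    have hxc : x ≤ c := by
      rw [← hs]
      refine Finset.sup_le fun j hj => ?_
      have hjx : (id j : L) ≤ x := hs ▸ Finset.le_sup hj
      by_cases hg : j ∈ gammaSet x
      · exact hall j hg
      · have hjn : j ≤ nucleus x := by
          by_contra h
          exact hg ⟨⟨hsirr hj, hjx⟩, fun hmem => h hmem.2⟩
        exact hjn.trans (nucleus_le_of_covBy hc)
    exact hc.lt.not_ge hxc
  have hub : x ∈ upperBounds (gammaSet x) := fun j hj => hj.1.2
  have hlub : IsLUB (gammaSet x) x := by
    refine ⟨hub, fun b hb => ?_⟩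
    set t := (gammaSet x).toFinset with ht
    have htx : t.sup id ≤ x := Finset.sup_le fun j hj => (Set.mem_toFinset.1 hj).1.2
    have heq : t.sup id = x := by
      rcases lt_or_eq_of_le htx with h | h
      · obtain ⟨c, hcle, hc⟩ := exists_le_covBy_of_lt h
        exact absurd
          (fun j hj => le_trans (Finset.le_sup (Set.mem_toFinset.2 hj)) hcle)
          (key c hc)
      · exact h
    calc x = t.sup id := heq.symm
      _ ≤ b := Finset.sup_le fun j hj => hb (Set.mem_toFinset.1 hj)
  refine ⟨hlub, fun Y hY b hb => ?_⟩
  have hbx : b ≤ x := hb.2 fun j hj => (hY.subset hj).1.2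
  rcases lt_or_eq_of_le hbx with h | h
  · exact h
  exfalso
  obtain ⟨j, hjg, hjY⟩ := Set.exists_of_ssubset hY
  have hbY : b = (Y.toFinset).sup id :=
    hb.unique ⟨fun y hy => Finset.le_sup (f := id) (Set.mem_toFinset.2 hy),
      fun c hc => Finset.sup_le fun y hy => hc (Set.mem_toFinset.1 hy)⟩
  have hjb : j ≤ (Y.toFinset).sup id := by rw [← hbY, h]; exact hjg.1.2
  obtain ⟨y, hyY, hjy⟩ := (hjg.1.1.supPrime.le_finset_sup).1 hjb
  have hyY' : y ∈ Y := Set.mem_toFinset.1 hyY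
  have hyg : y ∈ gammaSet x := hY.subset hyY'
  have hne : j ≠ y := fun he => hjY (he ▸ hyY')
  have hjn : j ≤ nucleus x :=
    le_nucleus_of_lt hyg.1.1 hyg.1.2 (lt_of_le_of_ne hjy hne)
  exact hjg.2 ⟨hjg.1.1, hjn⟩
end
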